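/- Let x ∈ gl(n,ℂ) with upper-left (n-1)×(n-1) submatrix x_{n-1}. If x and x_{n-1} have no common eigenvalue, then the centralizer of x_{n-1} in gl(n-1,ℂ) (embedded as the upper-left block of gl(n,ℂ)) intersects the centralizer of x in gl(n,ℂ) only in 0. -/

import Mathlib

/-!
Write `x = [[A, b], [c, d]]` with `A = x_{n-1}` the upper-left block. Commuting with the
embedded `Y` forces `c Y = 0`, so the range of `Y` is an `A`-invariant subspace on which `c`
vanishes. If `Y ≠ 0`, this range contains an eigenvector `w` of `A`, and then `(w, 0)` is an
eigenvector of `x` for the same eigenvalue.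
-/

/-- The embedding of `gl(n,ℂ)` into `gl(n+1,ℂ)` as the upper-left corner. -/
def cornerEmbed (n : ℕ) (Y : Matrix (Fin n) (Fin n) ℂ) :
    Matrix (Fin (n + 1)) (Fin (n + 1)) ℂ := fun i j =>
  if h : (i : ℕ) < n ∧ (j : ℕ) < n then Y ⟨i, h.1⟩ ⟨j, h.2⟩ else 0

open Matrix

namespace Module.End

variable {K V : Type*} [Field K] [IsAlgClosed K] [AddCommGroup V] [Module K V]
  [FiniteDimensional K V]

theorem exists_hasEigenvector_mem_of_mapsTo (f : End K V) {p : Submodule K V} (hp : p ≠ ⊥)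
    (hfp : ∀ v ∈ p, f v ∈ p) : ∃ μ v, v ∈ p ∧ f.HasEigenvector μ v := by
  have : Nontrivial p := Submodule.nontrivial_iff_ne_bot.mpr hp
  obtain ⟨μ, hμ⟩ := exists_eigenvalue (f.restrict hfp)
  obtain ⟨w, hw, hw0⟩ := hμ.exists_hasEigenvector
  exact ⟨μ, w, w.2, eigenspace_restrict_le_eigenspace f hfp μ ⟨w, hw, rfl⟩,
    fun h ↦ hw0 (Subtype.ext h)⟩

theorem exists_hasEigenvector_mem_range_of_commute {f g : End K V} (hfg : Commute f g)
    (hg : g ≠ 0) : ∃ μ v, v ∈ LinearMap.range g ∧ f.HasEigenvector μ v := by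
  refine f.exists_hasEigenvector_mem_of_mapsTo (LinearMap.range_eq_bot.not.mpr hg) ?_
  rintro _ ⟨u, rfl⟩
  exact ⟨f u, (LinearMap.congr_fun hfg u).symm⟩

end Module.End

namespace Matrix

theorem mem_spectrum_of_mulVec_eq_smul {R m : Type*} [CommRing R] [Fintype m] [DecidableEq m]
    {A : Matrix m m R} {μ : R} {v : m → R} (hv : v ≠ 0) (h : A *ᵥ v = μ • v) :
    μ ∈ spectrum R A :=
  spectrum_toLin' A ▸ (Module.End.hasEigenvalue_of_hasEigenvector
    ⟨Module.End.mem_eigenspace_iff.mpr h, hv⟩).mem_spectrum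

theorem mulVec_snoc_zero {R : Type*} [CommRing R] {n : ℕ}
    (x : Matrix (Fin (n + 1)) (Fin (n + 1)) R) (w : Fin n → R) :
    x *ᵥ Fin.snoc w 0 = Fin.snoc (x.submatrix Fin.castSucc Fin.castSucc *ᵥ w)
      ((x (Fin.last n) ∘ Fin.castSucc) ⬝ᵥ w) := by
  ext i
  refine Fin.lastCases ?_ (fun j ↦ ?_) i <;>
    simp [mulVec, dotProduct, Fin.sum_univ_castSucc]

end Matrix

section cornerEmbed

variable {n : ℕ} (Y : Matrix (Fin n) (Fin n) ℂ)

@[simp]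
theorem cornerEmbed_castSucc_castSucc (i j : Fin n) :
    cornerEmbed n Y i.castSucc j.castSucc = Y i j := by
  simp [cornerEmbed]

@[simp]
theorem cornerEmbed_last_left (j : Fin (n + 1)) : cornerEmbed n Y (Fin.last n) j = 0 := by
  simp [cornerEmbed]

theorem vecMul_eq_zero_of_commute_cornerEmbed {x : Matrix (Fin (n + 1)) (Fin (n + 1)) ℂ}
    (h : cornerEmbed n Y * x = x * cornerEmbed n Y) :
    (x (Fin.last n) ∘ Fin.castSucc) ᵥ* Y = 0 := by
  ext j
  have := congr_fun₂ h (Fin.last n) j.castSucc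
  simp only [mul_apply, Fin.sum_univ_castSucc] at this
  simpa [vecMul, dotProduct] using this.symm

end cornerEmbed

/-- **(Theorem 4.13 for `gl(n,ℂ)`.)**  Let `x ∈ gl(n+1,ℂ)` with upper-left `n × n`
submatrix `x_n`.  If `x` and `x_n` have no common eigenvalue, then the centralizer
of `x_n` in `gl(n,ℂ)` (embedded as the upper-left block) intersects the centralizer
of `x` in `gl(n+1,ℂ)` only in `0`. -/
theorem stmt11 (n : ℕ) (x : Matrix (Fin (n + 1)) (Fin (n + 1)) ℂ)
    (hspec : spectrum ℂ x ∩
      spectrum ℂ (x.submatrix (Fin.castSucc : Fin n → Fin (n + 1)) Fin.castSucc) = ∅) :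
    ∀ Y : Matrix (Fin n) (Fin n) ℂ,
      Y * x.submatrix (Fin.castSucc : Fin n → Fin (n + 1)) Fin.castSucc =
        x.submatrix (Fin.castSucc : Fin n → Fin (n + 1)) Fin.castSucc * Y →
      cornerEmbed n Y * x = x * cornerEmbed n Y → Y = 0 := by
  intro Y hYA hYx
  by_contra hY
  set A := x.submatrix (Fin.castSucc : Fin n → Fin (n + 1)) Fin.castSucc
  obtain ⟨μ, _, ⟨u, rfl⟩, hw⟩ := Module.End.exists_hasEigenvector_mem_range_of_commute
    ((Commute.symm hYA).map toLinAlgEquiv') (toLin'.map_ne_zero_iff.mpr hY)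
  have hAw : A *ᵥ (Y *ᵥ u) = μ • (Y *ᵥ u) := hw.apply_eq_smul
  have hcw : (x (Fin.last n) ∘ Fin.castSucc) ⬝ᵥ (Y *ᵥ u) = 0 := by
    rw [dotProduct_mulVec, vecMul_eq_zero_of_commute_cornerEmbed Y hYx, zero_dotProduct]
  have hxw : x *ᵥ Fin.snoc (Y *ᵥ u) 0 = μ • Fin.snoc (Y *ᵥ u) 0 := by
    rw [mulVec_snoc_zero, hAw, hcw]
    ext i
    refine Fin.lastCases ?_ (fun j ↦ ?_) i <;> simp
  have hμx : μ ∈ spectrum ℂ x := mem_spectrum_of_mulVec_eq_smul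
    (fun h ↦ hw.2 (funext fun j ↦ by simpa using congr_fun h j.castSucc)) hxw
  have hμA : μ ∈ spectrum ℂ A := mem_spectrum_of_mulVec_eq_smul hw.2 hAw
  exact Set.eq_empty_iff_forall_notMem.mp hspec μ ⟨hμx, hμA⟩
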